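/- Let W be the set of words w in M_n (including ε) with first letter ≠ a_1 and last letter ≠ a_1. Then the classes {p̂_w : w ∈ W} are linearly independent in Ĉ(M_n); equivalently, no nontrivial ℚ-linear combination Σ x_i p_{w_i} with distinct w_i ∈ W is a bounded function on M_n. -/

import Mathlib

open List Finset

/-- Number of occurrences of `w` as a contiguous subword of `v`. -/
def occ {α : Type*} [DecidableEq α] (w v : List α) : ℕ :=
  ((List.range (v.length + 1 - w.length)).filter (fun i => decide (w <+: v.drop i))).length

/-- Elementary counting function, with the convention `p_ε(v) = |v|`. -/
def cnt {α : Type*} [DecidableEq α] (w v : List α) : ℚ :=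
  if w = [] then v.length else occ w v

/-!
If `w` neither begins nor ends with the letter `a` and `|w| ≤ m`, no occurrence of `w` can
overlap a block `a^m`. Hence along the words `(u a^m)^k` every `p_w` with `w ∈ W`, and also `p_ε`,
grows linearly in `k` with slope `p_w(u a^m)`, so a bounded combination `∑ x_w p_w` satisfies
`∑ x_w p_w(u a^m) = 0` for every `u`. At `u = ε` this says `m x_ε = 0`; once `x_ε = 0` it says
`∑ x_w occ_w(u) = 0` for every `u`, a unitriangular system for the length order: evaluating at a
shortest `w` with `x_w ≠ 0` gives `x_w = 0`.
-/

theorem eq_zero_of_forall_abs_natCast_mul_le {K : Type*} [Field K] [LinearOrder K]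
    [IsStrictOrderedRing K] [Archimedean K] {F C : K} (h : ∀ k : ℕ, |k * F| ≤ C) : F = 0 := by
  by_contra hF
  obtain ⟨k, hk⟩ := exists_nat_gt (C / |F|)
  have hlt : C < k * |F| := (div_lt_iff₀ (abs_pos.mpr hF)).mp hk
  have := h k
  rw [abs_mul, Nat.abs_cast] at this
  linarith

section Occ

variable {α : Type*} {w v : List α} {a : α} {m : ℕ}

theorem prefix_append_replicate_append_iff (hw : w ≠ []) (hlast : w.getLast? ≠ some a)
    (hlen : w.length ≤ m) (s t : List α) :
    w <+: s ++ (List.replicate m a ++ t) ↔ w <+: s := by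
  refine ⟨fun h => ?_, fun h => h.trans (List.prefix_append s _)⟩
  by_cases hle : w.length ≤ s.length
  · rw [List.prefix_iff_eq_take, List.take_append_of_le_length hle] at h
    exact h ▸ List.take_prefix _ _
  · have hw1 : 1 ≤ w.length := List.length_pos_iff.mpr hw
    have hlast_eq : w[w.length - 1] = a := by
      rw [h.getElem (by omega), List.getElem_append_right (by omega),
        List.getElem_append_left (by simp; omega), List.getElem_replicate]
    exact absurd (by rw [List.getLast?_eq_some_getLast hw, List.getLast_eq_getElem, hlast_eq])
      hlast

variable [DecidableEq α]

theorem occ_eq_zero_of_length_lt (h : v.length < w.length) : occ w v = 0 := by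
  simp [occ, show v.length + 1 - w.length = 0 by omega]

theorem occ_nil_right (hw : w ≠ []) : occ w [] = 0 :=
  occ_eq_zero_of_length_lt (by simpa [List.length_pos_iff] using hw)

theorem occ_self (w : List α) : occ w w = 1 := by
  simp [occ, List.range_succ]

theorem occ_eq_zero_of_length_eq_of_ne (h : w.length = v.length) (hne : w ≠ v) : occ w v = 0 := by
  have : ¬ w <+: v := fun hp => hne (hp.eq_of_length h)
  simp [occ, show v.length + 1 - w.length = 1 by omega, List.range_succ, this]

theorem occ_cons (hw : w ≠ []) (c : α) (v : List α) :
    occ w (c :: v) = (if w <+: c :: v then 1 else 0) + occ w v := by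
  have hw1 : 1 ≤ w.length := List.length_pos_iff.mpr hw
  by_cases h : w.length ≤ v.length + 1
  · unfold occ
    rw [show (c :: v).length + 1 - w.length = (v.length + 1 - w.length) + 1 by
      simp only [List.length_cons]; omega, List.range_succ_eq_map,
      ← List.countP_eq_length_filter, ← List.countP_eq_length_filter,
      List.countP_cons, List.countP_map]
    by_cases hp : w <+: c :: v <;> simp [hp, Function.comp_def, Nat.add_comm]
  · have : ¬ w <+: c :: v := fun hp => by simpa using (h <| by simpa using hp.length_le)
    rw [occ_eq_zero_of_length_lt (by simpa using h), occ_eq_zero_of_length_lt (by omega)]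
    simp [this]

theorem occ_replicate_append (hw : w ≠ []) (hhead : w.head? ≠ some a) (m : ℕ) (t : List α) :
    occ w (List.replicate m a ++ t) = occ w t := by
  induction m with
  | zero => simp
  | succ k ih =>
    have hnp : ¬ w <+: a :: (List.replicate k a ++ t) := by
      obtain ⟨c, w', rfl⟩ := List.exists_cons_of_ne_nil hw
      rw [List.cons_prefix_cons]
      exact fun hp => hhead (by simp [hp.1])
    rw [List.replicate_succ, List.cons_append, occ_cons hw, ih]
    simp [hnp]

theorem occ_append_replicate_append (hw : w ≠ []) (hhead : w.head? ≠ some a)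
    (hlast : w.getLast? ≠ some a) (hlen : w.length ≤ m) (s t : List α) :
    occ w (s ++ (List.replicate m a ++ t)) = occ w s + occ w t := by
  induction s with
  | nil => simp [occ_nil_right hw, occ_replicate_append hw hhead m t]
  | cons c s ih =>
    have := prefix_append_replicate_append_iff hw hlast hlen (c :: s) t
    rw [List.cons_append, occ_cons hw, ih, occ_cons hw, if_congr (by simpa using this) rfl rfl]
    omega

theorem occ_append_replicate (hw : w ≠ []) (hhead : w.head? ≠ some a)
    (hlast : w.getLast? ≠ some a) (hlen : w.length ≤ m) (u : List α) :
    occ w (u ++ List.replicate m a) = occ w u := by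
  simpa [occ_nil_right hw] using occ_append_replicate_append hw hhead hlast hlen u []

theorem occ_flatten_replicate (hw : w ≠ []) (hhead : w.head? ≠ some a)
    (hlast : w.getLast? ≠ some a) (hlen : w.length ≤ m) (u : List α) (k : ℕ) :
    occ w (List.replicate k (u ++ List.replicate m a)).flatten = k * occ w u := by
  induction k with
  | zero => simp [occ_nil_right hw]
  | succ k ih =>
    rw [List.replicate_succ, List.flatten_cons, List.append_assoc,
      occ_append_replicate_append hw hhead hlast hlen, ih]
    ring

theorem cnt_append_replicate (hw : w ≠ []) (hhead : w.head? ≠ some a)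
    (hlast : w.getLast? ≠ some a) (hlen : w.length ≤ m) (u : List α) :
    cnt w (u ++ List.replicate m a) = occ w u := by
  rw [cnt, if_neg hw, occ_append_replicate hw hhead hlast hlen]

theorem cnt_flatten_replicate (hhead : w.head? ≠ some a) (hlast : w.getLast? ≠ some a)
    (hlen : w.length ≤ m) (u : List α) (k : ℕ) :
    cnt w (List.replicate k (u ++ List.replicate m a)).flatten
      = k * cnt w (u ++ List.replicate m a) := by
  by_cases hw : w = []
  · simp [cnt, hw, List.length_flatten, List.sum_replicate]
  · rw [cnt_append_replicate hw hhead hlast hlen, cnt, if_neg hw,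
      occ_flatten_replicate hw hhead hlast hlen]
    push_cast
    rfl

theorem Finsupp.eq_zero_of_forall_sum_mul_occ_eq_zero {R : Type*} [Semiring R]
    (x : List α →₀ R) (h : ∀ u, ∑ w ∈ x.support, x w * (occ w u : R) = 0) : x = 0 := by
  by_contra hx
  obtain ⟨w₀, hw₀, hmin⟩ :=
    x.support.exists_min_image List.length (Finsupp.support_nonempty_iff.mpr hx)
  have hsum : ∑ w ∈ x.support, x w * (occ w w₀ : R) = x w₀ := by
    rw [Finset.sum_eq_single_of_mem w₀ hw₀ fun w hw hne => ?_, occ_self, Nat.cast_one, mul_one]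
    rcases (hmin w hw).lt_or_eq with hlt | heq
    · rw [occ_eq_zero_of_length_lt hlt, Nat.cast_zero, mul_zero]
    · rw [occ_eq_zero_of_length_eq_of_ne heq.symm hne, Nat.cast_zero, mul_zero]
  exact Finsupp.mem_support_iff.mp hw₀ (hsum ▸ h w₀)

end Occ

/-- The classes of p_w, for w neither beginning nor ending with a_1, are linearly
independent in Ĉ(M_n): no nontrivial combination of them is a bounded function. -/
theorem stmt_11 (n : ℕ) (hn : 2 ≤ n) (x : List (Fin n) →₀ ℚ)
    (hx : ∀ w ∈ x.support, w.head? ≠ some (⟨0, by omega⟩ : Fin n) ∧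
      w.getLast? ≠ some (⟨0, by omega⟩ : Fin n))
    (hbdd : ∃ C : ℚ, ∀ v : List (Fin n), |∑ u ∈ x.support, x u * cnt u v| ≤ C) :
    x = 0 := by
  obtain ⟨C, hC⟩ := hbdd
  set a : Fin n := ⟨0, by omega⟩
  set m := x.support.sup List.length + 1
  have hlen : ∀ w ∈ x.support, w.length ≤ m := fun w hw => Nat.le_succ_of_le (le_sup hw)
  have hrel : ∀ u, ∑ w ∈ x.support, x w * cnt w (u ++ List.replicate m a) = 0 := by
    refine fun u => eq_zero_of_forall_abs_natCast_mul_le (C := C) fun k => ?_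
    have hk := hC (List.replicate k (u ++ List.replicate m a)).flatten
    rwa [Finset.sum_congr rfl fun w hw => by
      rw [cnt_flatten_replicate (hx w hw).1 (hx w hw).2 (hlen w hw), mul_left_comm],
      ← Finset.mul_sum] at hk
  have hnil : [] ∉ x.support := fun hmem => by
    have := hrel []
    rw [Finset.sum_eq_single_of_mem [] hmem fun w hw hne => by
      rw [cnt_append_replicate hne (hx w hw).1 (hx w hw).2 (hlen w hw), occ_nil_right hne,
        Nat.cast_zero, mul_zero]] at this
    simp only [cnt, ↓reduceIte, nil_append, length_replicate, Nat.cast_add, Nat.cast_one,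
      mul_eq_zero, Finsupp.mem_support_iff.mp hmem, false_or, m] at this
    exact absurd this (by positivity)
  refine Finsupp.eq_zero_of_forall_sum_mul_occ_eq_zero x fun u => (hrel u) ▸ ?_
  refine Finset.sum_congr rfl fun w hw => ?_
  rw [cnt_append_replicate (ne_of_mem_of_not_mem hw hnil) (hx w hw).1 (hx w hw).2 (hlen w hw)]
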